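/- arXiv:2212.09831 — 4 statements merged into one kernel-verified Lean document; each statement's English description precedes it below -/
import Mathlib

section
/- Let (Ω, P) be a probability space, let A : [0,1] → [1/2, 1], and let Z₁, Z₂ : Ω → ℝ be random variables with Z₁ > 0 and Z₂ > 0 almost surely whose joint distribution satisfies P(Z₁ ≤ z₁, Z₂ ≤ z₂) = exp{−(1/z₁ + 1/z₂) A(z₁/(z₁+z₂))} for all z₁, z₂ > 0. Fix ω ∈ (0,1), let γ be the Euler–Mascheroni constant, and define Y := log(max((1−ω) Z₁, ω Z₂)) − γ. Then P(Y ≤ y) = exp(−A(ω) e^{−(y+γ)}) for all y ∈ ℝ; equivalently, Y is distributed as log A(ω) + ε with ε ∼ Gumbel(−γ, 1). -/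
/-!
For `z > 0`, `log (max ((1-ω) Z₁) (ω Z₂)) ≤ log z` holds exactly when `Z₁ ≤ z/(1-ω)` and
`Z₂ ≤ z/ω`, so `P(Y ≤ y)` is the joint distribution function at `(z/(1-ω), z/ω)` with
`z = exp (y + γ)`. The exponent function is homogeneous of degree `-1` and equals `A ω` at
`(1/(1-ω), 1/ω)`, which gives `exp (-A ω / z)`.
-/

open MeasureTheory Real

noncomputable def pickandsExponent (A : ℝ → ℝ) (z₁ z₂ : ℝ) : ℝ :=
  (1 / z₁ + 1 / z₂) * A (z₁ / (z₁ + z₂))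

lemma pickandsExponent_mul {A : ℝ → ℝ} {t : ℝ} (ht : t ≠ 0) (z₁ z₂ : ℝ) :
    pickandsExponent A (t * z₁) (t * z₂) = t⁻¹ * pickandsExponent A z₁ z₂ := by
  unfold pickandsExponent
  rw [← mul_add, mul_div_mul_left _ _ ht]
  field_simp

lemma pickandsExponent_inv_sub_inv {A : ℝ → ℝ} {ω : ℝ} (hω₀ : ω ≠ 0) (hω₁ : ω ≠ 1) :
    pickandsExponent A (1 - ω)⁻¹ ω⁻¹ = A ω := by
  have h : 1 - ω ≠ 0 := sub_ne_zero.mpr (Ne.symm hω₁)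
  have harg : (1 - ω)⁻¹ / ((1 - ω)⁻¹ + ω⁻¹) = ω := by field_simp; ring
  simp [pickandsExponent, harg]

lemma log_max_mul_le_iff {a b x y c : ℝ} (ha : 0 < a) (hb : 0 < b) (hx : 0 < x) :
    log (max (a * x) (b * y)) ≤ c ↔ x ≤ exp c / a ∧ y ≤ exp c / b := by
  rw [log_le_iff_le_exp (lt_max_of_lt_left (mul_pos ha hx)), max_le_iff,
    le_div_iff₀' ha, le_div_iff₀' hb]

lemma measure_log_max_mul_le {Ω : Type*} [MeasurableSpace Ω] {P : Measure Ω}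
    {Z₁ Z₂ : Ω → ℝ} (hZ₁ : ∀ᵐ o ∂P, 0 < Z₁ o) {a b : ℝ} (ha : 0 < a) (hb : 0 < b) (c : ℝ) :
    P {o | log (max (a * Z₁ o) (b * Z₂ o)) ≤ c} =
      P {o | Z₁ o ≤ exp c / a ∧ Z₂ o ≤ exp c / b} := by
  refine measure_congr ?_
  filter_upwards [hZ₁] with o ho
  exact propext (log_max_mul_le_iff ha hb ho)

theorem stmt_5_general {Ω : Type*} [MeasurableSpace Ω] (P : Measure Ω)
    (A : ℝ → ℝ)
    (Z₁ Z₂ : Ω → ℝ)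
    (hZ₁pos : ∀ᵐ o ∂P, 0 < Z₁ o)
    (hjoint : ∀ z₁ z₂ : ℝ, 0 < z₁ → 0 < z₂ →
      P {o | Z₁ o ≤ z₁ ∧ Z₂ o ≤ z₂} =
        ENNReal.ofReal (Real.exp (-((1 / z₁ + 1 / z₂) * A (z₁ / (z₁ + z₂))))))
    (ω : ℝ) (hω : ω ∈ Set.Ioo (0 : ℝ) 1)
    (Y : Ω → ℝ)
    (hY : Y = fun o =>
      Real.log (max ((1 - ω) * Z₁ o) (ω * Z₂ o)) - Real.eulerMascheroniConstant) :
    ∀ y : ℝ,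
      P {o | Y o ≤ y} =
        ENNReal.ofReal (Real.exp (-A ω * Real.exp (-(y + Real.eulerMascheroniConstant)))) := by
  intro y
  obtain ⟨hω₀, hω₁⟩ := hω
  have h1ω : 0 < 1 - ω := sub_pos.mpr hω₁
  set z := exp (y + eulerMascheroniConstant)
  have hz : 0 < z := exp_pos _
  have hevent : {o | Y o ≤ y} = {o | log (max ((1 - ω) * Z₁ o) (ω * Z₂ o)) ≤
      y + eulerMascheroniConstant} := by
    simp only [hY, sub_le_iff_le_add]
  have hV : pickandsExponent A (z / (1 - ω)) (z / ω) =
      A ω * exp (-(y + eulerMascheroniConstant)) := by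
    rw [div_eq_mul_inv, div_eq_mul_inv z, pickandsExponent_mul hz.ne',
      pickandsExponent_inv_sub_inv hω₀.ne' hω₁.ne, exp_neg, mul_comm]
  rw [hevent, measure_log_max_mul_le hZ₁pos h1ω hω₀,
    hjoint _ _ (div_pos hz h1ω) (div_pos hz hω₀), ← pickandsExponent, hV, neg_mul]

/-- LogMax-projection along an arbitrary direction `ω ∈ (0,1)`: for a bivariate simple
max-stable vector with Pickands dependence function `A`, the variable
`Y = log(max((1-ω)Z₁, ω Z₂)) - γ` satisfies `P(Y ≤ y) = exp(-A(ω) e^{-(y+γ)})`. -/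
theorem stmt_5 {Ω : Type*} [MeasurableSpace Ω] (P : Measure Ω) [IsProbabilityMeasure P]
    (A : ℝ → ℝ) (hA : ∀ t ∈ Set.Icc (0 : ℝ) 1, A t ∈ Set.Icc (1 / 2 : ℝ) 1)
    (Z₁ Z₂ : Ω → ℝ) (hZ₁meas : Measurable Z₁) (hZ₂meas : Measurable Z₂)
    (hZ₁pos : ∀ᵐ o ∂P, 0 < Z₁ o) (hZ₂pos : ∀ᵐ o ∂P, 0 < Z₂ o)
    (hjoint : ∀ z₁ z₂ : ℝ, 0 < z₁ → 0 < z₂ →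
      P {o | Z₁ o ≤ z₁ ∧ Z₂ o ≤ z₂} =
        ENNReal.ofReal (Real.exp (-((1 / z₁ + 1 / z₂) * A (z₁ / (z₁ + z₂))))))
    (ω : ℝ) (hω : ω ∈ Set.Ioo (0 : ℝ) 1)
    (Y : Ω → ℝ)
    (hY : Y = fun o =>
      Real.log (max ((1 - ω) * Z₁ o) (ω * Z₂ o)) - Real.eulerMascheroniConstant) :
    ∀ y : ℝ,
      P {o | Y o ≤ y} =
        ENNReal.ofReal (Real.exp (-A ω * Real.exp (-(y + Real.eulerMascheroniConstant)))) :=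
  stmt_5_general P A Z₁ Z₂ hZ₁pos hjoint ω hω Y hY
end

section
/- Let (Ω, P) be a probability space, let A : [0,1] → [1/2, 1], and let Z₁, Z₂ : Ω → ℝ be random variables with Z₁ > 0 and Z₂ > 0 almost surely whose joint distribution satisfies P(Z₁ ≤ z₁, Z₂ ≤ z₂) = exp{−(1/z₁ + 1/z₂) A(z₁/(z₁+z₂))} for all z₁, z₂ > 0. Fix ω ∈ (0,1), set λ₁ = ω(1/ω + 1/(1−ω)) = 1/(1−ω) and λ₂ = (1−ω)(1/ω + 1/(1−ω)) = 1/ω, let H(x) = e^{−1/x} for x > 0, and define Y := max{H(Z₁)^{λ₁}, H(Z₂)^{λ₂}}. Then P(Y ≤ y) = y^{A(ω)} for all y ∈ (0,1); that is, Y has the Beta(A(ω), 1) distribution. -/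
open MeasureTheory Real

/-!
For `0 < y < 1` put `c = -log y`. Since `H(z)^λ = exp(-λ/z)`, the event `{Y ≤ y}` is, up to the
null set where some `Zᵢ ≤ 0`, the rectangle `{Z₁ ≤ λ₁/c, Z₂ ≤ λ₂/c}`. The weights `λ₁ = 1/(1-ω)`,
`λ₂ = 1/ω` are chosen so that this corner satisfies `1/z₁ + 1/z₂ = c` and `z₁/(z₁+z₂) = ω`, so the
joint distribution function there equals `exp(-c A(ω)) = y^{A(ω)}`.
-/

lemma exp_neg_one_div_rpow_le_iff {z y : ℝ} (lam : ℝ) (hz : 0 < z) (hy₀ : 0 < y) (hy₁ : y < 1) :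
    exp (-(1 / z)) ^ lam ≤ y ↔ z ≤ lam / -log y := by
  have hc : 0 < -log y := neg_pos.mpr (log_neg hy₀ hy₁)
  rw [← exp_mul, ← exp_log hy₀, exp_le_exp, log_exp, le_div_iff₀ hc, ← le_div_iff₀' hz]
  constructor <;> intro h <;> linarith [show -(1 / z) * lam = -(lam / z) by ring]

lemma one_div_div_ratio_of_add_eq_one {p q c : ℝ} (hp : p ≠ 0) (hq : q ≠ 0) (hpq : p + q = 1) (hc : c ≠ 0) :
    1 / q / c / (1 / q / c + 1 / p / c) = p := by
  have hsum : 1 / q / c + 1 / p / c = 1 / (p * q * c) := by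
    field_simp
    linear_combination hpq
  rw [hsum]
  field_simp

lemma one_div_one_div_div_add_of_add_eq_one {p q c : ℝ} (hpq : p + q = 1) :
    1 / (1 / q / c) + 1 / (1 / p / c) = c := by
  field_simp
  linear_combination c * hpq

theorem stmt_6_general {Ω : Type*} [MeasurableSpace Ω] (P : Measure Ω)
    (A : ℝ → ℝ)
    (Z₁ Z₂ : Ω → ℝ)
    (hZ₁pos : ∀ᵐ o ∂P, 0 < Z₁ o) (hZ₂pos : ∀ᵐ o ∂P, 0 < Z₂ o)
    (hjoint : ∀ z₁ z₂ : ℝ, 0 < z₁ → 0 < z₂ →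
      P {o | Z₁ o ≤ z₁ ∧ Z₂ o ≤ z₂} =
        ENNReal.ofReal (Real.exp (-((1 / z₁ + 1 / z₂) * A (z₁ / (z₁ + z₂))))))
    (ω : ℝ) (hω : ω ∈ Set.Ioo (0 : ℝ) 1)
    (lam₁ lam₂ : ℝ) (hlam₁ : lam₁ = ω * (1 / ω + 1 / (1 - ω)))
    (hlam₂ : lam₂ = (1 - ω) * (1 / ω + 1 / (1 - ω)))
    (H : ℝ → ℝ) (hH : ∀ x : ℝ, H x = Real.exp (-(1 / x)))
    (Y : Ω → ℝ)
    (hY : Y = fun o => max (H (Z₁ o) ^ lam₁) (H (Z₂ o) ^ lam₂)) :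
    ∀ y ∈ Set.Ioo (0 : ℝ) 1, P {o | Y o ≤ y} = ENNReal.ofReal (y ^ A ω) := by
  rintro y ⟨hy₀, hy₁⟩
  obtain ⟨hω₀, hω₁⟩ := hω
  have hω₁' : 0 < 1 - ω := sub_pos.mpr hω₁
  have hlam₁' : lam₁ = 1 / (1 - ω) := by rw [hlam₁]; field_simp; ring
  have hlam₂' : lam₂ = 1 / ω := by rw [hlam₂]; field_simp; ring
  subst hlam₁' hlam₂' hY
  set c := -log y
  have hc : 0 < c := neg_pos.mpr (log_neg hy₀ hy₁)
  have hrect : {o | max (H (Z₁ o) ^ (1 / (1 - ω))) (H (Z₂ o) ^ (1 / ω)) ≤ y}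
      =ᵐ[P] {o | Z₁ o ≤ 1 / (1 - ω) / c ∧ Z₂ o ≤ 1 / ω / c} := by
    filter_upwards [hZ₁pos, hZ₂pos] with o h₁ h₂
    show (max _ _ ≤ y) = (_ ∧ _)
    rw [eq_iff_iff, max_le_iff, hH, hH, exp_neg_one_div_rpow_le_iff _ h₁ hy₀ hy₁,
      exp_neg_one_div_rpow_le_iff _ h₂ hy₀ hy₁]
  have hpq : ω + (1 - ω) = 1 := by ring
  rw [measure_congr hrect, hjoint _ _ (by positivity) (by positivity),
    one_div_div_ratio_of_add_eq_one hω₀.ne' hω₁'.ne' hpq hc.ne', one_div_one_div_div_add_of_add_eq_one hpq,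
    rpow_def_of_pos hy₀, neg_mul_eq_neg_mul, neg_neg]

/-- Max-projection of Mhalla et al.: for a bivariate simple max-stable vector with Pickands
dependence function `A` and `ω ∈ (0,1)`, with `λ₁ = 1/(1-ω)`, `λ₂ = 1/ω` and `H(x) = e^{-1/x}`,
the variable `Y = max(H(Z₁)^{λ₁}, H(Z₂)^{λ₂})` satisfies `P(Y ≤ y) = y^{A(ω)}` on `(0,1)`,
i.e. `Y ∼ Beta(A(ω), 1)`. -/
theorem stmt_6 {Ω : Type*} [MeasurableSpace Ω] (P : Measure Ω) [IsProbabilityMeasure P]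
    (A : ℝ → ℝ) (hA : ∀ t ∈ Set.Icc (0 : ℝ) 1, A t ∈ Set.Icc (1 / 2 : ℝ) 1)
    (Z₁ Z₂ : Ω → ℝ) (hZ₁meas : Measurable Z₁) (hZ₂meas : Measurable Z₂)
    (hZ₁pos : ∀ᵐ o ∂P, 0 < Z₁ o) (hZ₂pos : ∀ᵐ o ∂P, 0 < Z₂ o)
    (hjoint : ∀ z₁ z₂ : ℝ, 0 < z₁ → 0 < z₂ →
      P {o | Z₁ o ≤ z₁ ∧ Z₂ o ≤ z₂} =
        ENNReal.ofReal (Real.exp (-((1 / z₁ + 1 / z₂) * A (z₁ / (z₁ + z₂))))))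
    (ω : ℝ) (hω : ω ∈ Set.Ioo (0 : ℝ) 1)
    (lam₁ lam₂ : ℝ) (hlam₁ : lam₁ = ω * (1 / ω + 1 / (1 - ω)))
    (hlam₂ : lam₂ = (1 - ω) * (1 / ω + 1 / (1 - ω)))
    (H : ℝ → ℝ) (hH : ∀ x : ℝ, H x = Real.exp (-(1 / x)))
    (Y : Ω → ℝ)
    (hY : Y = fun o => max (H (Z₁ o) ^ lam₁) (H (Z₂ o) ^ lam₂)) :
    ∀ y ∈ Set.Ioo (0 : ℝ) 1, P {o | Y o ≤ y} = ENNReal.ofReal (y ^ A ω) :=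
  stmt_6_general P A Z₁ Z₂ hZ₁pos hZ₂pos hjoint ω hω lam₁ lam₂ hlam₁ hlam₂ H hH Y hY
end

section
/- Let (Ω, 𝒜, P) be a probability space, let d ∈ ℕ, and for each subset S ⊆ {1, …, d} let R_S ∈ 𝒜 be a measurable event (the event that the null hypothesis H_{0,S} is rejected). Let S⋆ ⊆ {1, …, d} and α ∈ [0,1] be such that P(R_{S⋆}) ≤ α (the test for S⋆ has level α). Define the random set Ŝ⋆(ω) := ⋂ {S ⊆ {1, …, d} : ω ∉ R_S} (with the convention that the intersection over the empty family is {1, …, d}). Then P({ω : Ŝ⋆(ω) ⊆ S⋆}) ≥ 1 − α. -/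
open MeasureTheory

/-- Coverage guarantee for invariant causal prediction (Theorem 1 of the paper):
if the test of `H_{0,S⋆}` has level `α`, i.e. `P(R S⋆) ≤ α` where `R S` is the rejection
event for the candidate set `S`, then the estimator
`Ŝ⋆(ω) = ⋂ {S : ω ∉ R S}` (intersection over all non-rejected sets, with the whole index
set as the empty intersection) satisfies `P(Ŝ⋆ ⊆ S⋆) ≥ 1 - α`. -/
theorem stmt_7 {Ω : Type*} [MeasurableSpace Ω] (P : Measure Ω) [IsProbabilityMeasure P]
    (d : ℕ) (R : Finset (Fin d) → Set Ω) (hRmeas : ∀ S, MeasurableSet (R S))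
    (Sstar : Finset (Fin d)) (α : ℝ) (hα : α ∈ Set.Icc (0 : ℝ) 1)
    (hlevel : P (R Sstar) ≤ ENNReal.ofReal α) :
    P {ω | {i : Fin d | ∀ S : Finset (Fin d), ω ∉ R S → i ∈ S} ⊆ (Sstar : Set (Fin d))} ≥
      1 - ENNReal.ofReal α := by
  have hsub : (R Sstar)ᶜ ⊆
      {ω | {i : Fin d | ∀ S : Finset (Fin d), ω ∉ R S → i ∈ S} ⊆ (Sstar : Set (Fin d))} := by
    intro ω hω i hi
    exact hi Sstar hω
  calc 1 - ENNReal.ofReal α ≤ 1 - P (R Sstar) := by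
        exact tsub_le_tsub_left hlevel 1
    _ = P (R Sstar)ᶜ := (prob_compl_eq_one_sub (hRmeas Sstar)).symm
    _ ≤ _ := measure_mono hsub
end

section
/- Let (Ω, 𝒜, P) be a probability space, let E be a nonempty standard Borel space, F a measurable space, and ℝ the real line. Let X : Ω → E and ε : Ω → F be measurable with X and ε independent under P, let μ_ε denote the law of ε, let g : E × F → ℝ be measurable, and define Y := ω ↦ g(X(ω), ε(ω)). Then the conditional distribution of Y given X satisfies, for (P ∘ X⁻¹)-almost every x ∈ E, condDistrib Y X P (x) = μ_ε.map (u ↦ g(x, u)); i.e. the conditional law of Y given X = x is the pushforward of the noise law under g(x, ·). -/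
open MeasureTheory ProbabilityTheory

/-!
If `ε` is independent of `X`, the joint law of `(X, ε)` is the product of the marginals. Pushing
it forward along `(x, u) ↦ (x, g (x, u))` gives the joint law of `(X, Y)` in the form
`P.map X ⊗ₘ κ` with `κ x = (P.map ε).map (g (x, ·))`, and this disintegration characterises
`condDistrib Y X P` up to `P.map X`-null sets.
-/

section

variable {α β γ : Type*} [MeasurableSpace α] [MeasurableSpace β] [MeasurableSpace γ]

namespace ProbabilityTheory.Kernel

lemma map_id_prod_const_apply (ν : Measure β) [SFinite ν] {g : α × β → γ} (hg : Measurable g)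
    (x : α) : (Kernel.id ×ₖ Kernel.const α ν).map g x = ν.map (fun u => g (x, u)) := by
  rw [map_apply _ hg, prod_apply, id_apply, const_apply, Measure.dirac_prod,
    Measure.map_map hg measurable_prodMk_left]
  rfl

end ProbabilityTheory.Kernel

namespace MeasureTheory.Measure

lemma map_prod_fst_prodMk_eq_compProd (μ : Measure α) [SFinite μ] (ν : Measure β) [SFinite ν]
    {g : α × β → γ} (hg : Measurable g) :
    (μ.prod ν).map (fun p => (p.1, g p)) = μ ⊗ₘ (Kernel.id ×ₖ Kernel.const α ν).map g := by
  have hf : Measurable fun p : α × β => (p.1, g p) := measurable_fst.prodMk hg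
  ext s hs
  rw [map_apply hf hs, compProd_apply hs, prod_apply (hf hs)]
  refine lintegral_congr fun x => ?_
  rw [Kernel.map_id_prod_const_apply ν hg,
    map_apply (f := fun u => g (x, u)) (hg.comp measurable_prodMk_left)
      (measurable_prodMk_left hs)]
  rfl

end MeasureTheory.Measure

namespace ProbabilityTheory.IndepFun

variable {Ω : Type*} [MeasurableSpace Ω] {P : Measure Ω} [IsFiniteMeasure P]
  {X : Ω → α} {ε : Ω → β} {g : α × β → γ}

lemma map_prodMk_comp_eq_compProd (hindep : IndepFun X ε P) (hX : AEMeasurable X P)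
    (hε : AEMeasurable ε P) (hg : Measurable g) :
    P.map (fun ω => (X ω, g (X ω, ε ω))) =
      P.map X ⊗ₘ (Kernel.id ×ₖ Kernel.const α (P.map ε)).map g := by
  have hjoint : P.map (fun ω => (X ω, ε ω)) = (P.map X).prod (P.map ε) :=
    (indepFun_iff_map_prod_eq_prod_map_map hX hε).mp hindep
  calc P.map (fun ω => (X ω, g (X ω, ε ω)))
      = (P.map (fun ω => (X ω, ε ω))).map (fun p => (p.1, g p)) := by
        rw [AEMeasurable.map_map_of_aemeasurable (measurable_fst.prodMk hg).aemeasurable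
          (hX.prodMk hε)]
        rfl
    _ = P.map X ⊗ₘ (Kernel.id ×ₖ Kernel.const α (P.map ε)).map g := by
        rw [hjoint, Measure.map_prod_fst_prodMk_eq_compProd _ _ hg]

lemma condDistrib_comp_ae_eq [StandardBorelSpace γ] [Nonempty γ] (hindep : IndepFun X ε P)
    (hX : AEMeasurable X P) (hε : AEMeasurable ε P) (hg : Measurable g) :
    condDistrib (fun ω => g (X ω, ε ω)) X P =ᵐ[P.map X]
      (Kernel.id ×ₖ Kernel.const α (P.map ε)).map g :=
  condDistrib_ae_eq_of_measure_eq_compProd X (hg.comp_aemeasurable (hX.prodMk hε))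
    (hindep.map_prodMk_comp_eq_compProd hX hε hg)

end ProbabilityTheory.IndepFun

end

theorem stmt_8_general {Ω E F : Type*} [MeasurableSpace Ω]
    [MeasurableSpace E]
    [MeasurableSpace F]
    (P : Measure Ω) [IsProbabilityMeasure P]
    (X : Ω → E) (ε : Ω → F) (hX : Measurable X) (hε : Measurable ε)
    (hindep : IndepFun X ε P)
    (g : E × F → ℝ) (hg : Measurable g)
    (Y : Ω → ℝ) (hY : Y = fun ω => g (X ω, ε ω)) :
    ∀ᵐ x ∂(P.map X),
      condDistrib Y X P x = (P.map ε).map (fun u => g (x, u)) := by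
  subst hY
  filter_upwards [hindep.condDistrib_comp_ae_eq hX.aemeasurable hε.aemeasurable hg] with x hx
  rw [hx, Kernel.map_id_prod_const_apply _ hg]

/-- Forward direction of Lemma 1 of the paper: if `Y = g(X, ε)` with `ε` independent of `X`,
then for `(P ∘ X⁻¹)`-almost every `x`, the conditional distribution of `Y` given `X = x` is
the pushforward of the law of `ε` under `g(x, ·)`. -/
theorem stmt_8 {Ω E F : Type*} [MeasurableSpace Ω]
    [MeasurableSpace E] [StandardBorelSpace E] [Nonempty E]
    [MeasurableSpace F]
    (P : Measure Ω) [IsProbabilityMeasure P]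
    (X : Ω → E) (ε : Ω → F) (hX : Measurable X) (hε : Measurable ε)
    (hindep : IndepFun X ε P)
    (g : E × F → ℝ) (hg : Measurable g)
    (Y : Ω → ℝ) (hY : Y = fun ω => g (X ω, ε ω)) :
    ∀ᵐ x ∂(P.map X),
      condDistrib Y X P x = (P.map ε).map (fun u => g (x, u)) :=
  stmt_8_general P X ε hX hε hindep g hg Y hY
end
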